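/- arXiv:0805.1411 — 3 statements merged into one kernel-verified Lean document; each statement's English description precedes it below -/
import Mathlib

section
/- The cochains τ_m are normalized (reduced): for 1 ≤ k ≤ n, τ_{2k}(a₀ ⊗ ⋯ ⊗ a_{2k}) = 0 whenever aⱼ is a constant polynomial for some index j with 1 ≤ j ≤ 2k; and τ_{2k−1}(a₀ ⊗ ⋯ ⊗ a_{2k−1}) = 0 whenever aⱼ is a constant polynomial for some index j with 0 ≤ j ≤ 2k−1. -/
/-!
Every term of `(ℏα)^{∧k}` is a product of operators `α_{ij}` whose index pairs cover all the
slots the wedge acts on. Each `α_{ij}` is a sum of products of a partial derivative in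
slot `i` and one in slot `j`. Since partial derivatives commute, the `α_{ij}` preserve
independence of a slot, and one touching a slot kills every polynomial independent of it.
A constant `a_j` makes `a₀ ⊗ ⋯ ⊗ a_m` independent of slot `j`, and in both parities slot `j`
is among the slots of the wedge, so the integrand of `τ_m` vanishes.
-/

open MeasureTheory

noncomputable section

/-- The polynomial Weyl algebra `𝕎 = ℝ[y¹,…,y^{2n}]` (underlying space). -/
abbrev Weyl (n : ℕ) : Type := MvPolynomial (Fin (2*n)) ℝ

/-- Model for the tensor power `𝕎^{⊗N}`: polynomials in `N` groups of `2n` variables. -/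
abbrev JointW (N n : ℕ) : Type := MvPolynomial (Fin N × Fin (2*n)) ℝ

/-- index of the canonical coordinate `p_s`. -/
def pCoord (n : ℕ) (s : Fin n) : Fin (2*n) := ⟨2*s.1, by have := s.2; omega⟩
/-- index of the canonical coordinate `q_s`. -/
def qCoord (n : ℕ) (s : Fin n) : Fin (2*n) := ⟨2*s.1+1, by have := s.2; omega⟩

/-- The Poisson bi-differential operator `α_{ij}` acting on the slots `i,j` of the
tensor power `𝕎^{⊗N}`. -/
def alphaOp (n N : ℕ) (i j : Fin N) : Module.End ℝ (JointW N n) :=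
  ∑ s : Fin n,
    ((MvPolynomial.pderiv (i, pCoord n s)).toLinearMap ∘ₗ
        (MvPolynomial.pderiv (j, qCoord n s)).toLinearMap
      - (MvPolynomial.pderiv (i, qCoord n s)).toLinearMap ∘ₗ
        (MvPolynomial.pderiv (j, pCoord n s)).toLinearMap)

/-- `e^{c·L} F`: the exponential series of the operator `L`, which terminates on each
polynomial `F` for the locally nilpotent operators used here. -/
def expOp {N n : ℕ} (c : ℝ) (L : Module.End ℝ (JointW N n)) (F : JointW N n) : JointW N n :=
  ∑ k ∈ Finset.range (F.totalDegree + 1), (c ^ k / (Nat.factorial k : ℝ)) • (L ^ k) F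

/-- `∏_{0 ≤ i < j ≤ N-1} e^{ℏ(u_i - u_j + 1/2) α_{ij}}` applied to `F` (the various
`α_{ij}` commute, so the order of application is irrelevant). -/
def prodExpAlpha (n N : ℕ) (h : ℝ) (u : Fin N → ℝ) (F : JointW N n) : JointW N n :=
  (List.finRange N).foldl (fun G i =>
    (List.finRange N).foldl (fun G' j =>
      if i < j then expOp (h * (u i - u j + 1/2)) (alphaOp n N i j) G' else G') G) F

/-- `(ℏα)^{∧k}` acting on the `2k` slots enumerated (in increasing order) by `slots`,
written as a sum over all permutations; each perfect matching is counted `2^k·k!`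
times with the correct sign, whence the normalizing factor. -/
def alphaWedge (n N : ℕ) (k : ℕ) (slots : Fin (2*k) → Fin N) (h : ℝ) (F : JointW N n) :
    JointW N n :=
  ((2^k * (Nat.factorial k) : ℝ))⁻¹ •
    ∑ σ : Equiv.Perm (Fin (2*k)),
      (((Equiv.Perm.sign σ : ℤˣ) : ℤ) : ℝ) • h^k •
        ((List.finRange k).foldl (fun G l =>
          alphaOp n N (slots (σ ⟨2*l.1, by have := l.2; omega⟩))
            (slots (σ ⟨2*l.1+1, by have := l.2; omega⟩)) G) F)

/-- `a₀ ⊗ ⋯ ⊗ a_{N-1}` as an element of the joint algebra. -/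
def tensorW {N n : ℕ} (a : Fin N → Weyl n) : JointW N n :=
  ∏ i, MvPolynomial.rename (fun v => (i, v)) (a i)

/-- `μ` : evaluation of all slots at `0`. -/
def evalZero {N n : ℕ} (F : JointW N n) : ℝ := MvPolynomial.eval (fun _ => 0) F

/-- The standard simplex `0 ≤ u₁ ≤ ⋯ ≤ u_m ≤ 1`. -/
def simplexSet (m : ℕ) : Set (Fin m → ℝ) :=
  {u | (∀ i, 0 ≤ u i ∧ u i ≤ 1) ∧ ∀ i j : Fin m, i ≤ j → u i ≤ u j}

/-- extend `(u₁,…,u_m)` by `u₀ = 0`. -/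
def uExt {m : ℕ} (u : Fin m → ℝ) : Fin (m+1) → ℝ := fun i => Fin.cases 0 u i

/-- The cochains `τ_m` on the polynomial Weyl algebra.  For even `m = 2k`,
`τ_{2k}(a) = (-1)^k ∫_{Δ^{2k}} μ(∏_{i<j} e^{ℏ(u_i-u_j+1/2)α_{ij}} π_{2k}(a)) du`, where
`π_{2k} = (ℏα)^{∧k}` acts on the slots `1,…,2k`;  for odd `m = 2k-1`,
`τ_{2k-1}(a) = (-1)^{k-1} ∫_{Δ^{2k-1}} μ(∏_{i<j} e^{ℏ(u_i-u_j+1/2)α_{ij}} (ℏα)^{∧k}(a)) du`,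
where `(ℏα)^{∧k}` acts on all `2k` slots `0,…,2k-1`. -/
def tau (n : ℕ) (h : ℝ) (m : ℕ) (a : Fin (m+1) → Weyl n) : ℝ :=
  if m % 2 = 0 then
    (-1 : ℝ)^(m/2) * ∫ u in simplexSet m, evalZero
      (prodExpAlpha n (m+1) h (uExt u)
        (alphaWedge n (m+1) (m/2) (fun i => ⟨i.1+1, by have := i.2; omega⟩) h (tensorW a)))
  else
    (-1 : ℝ)^((m+1)/2 - 1) * ∫ u in simplexSet m, evalZero
      (prodExpAlpha n (m+1) h (uExt u)
        (alphaWedge n (m+1) ((m+1)/2) (fun i => ⟨i.1, by have := i.2; omega⟩) h (tensorW a)))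

/-- The Moyal–Weyl star product `f ⋆ g = m(exp((ℏ/2)α)(f ⊗ g))`. -/
def moyal (n : ℕ) (h : ℝ) (f g : Weyl n) : Weyl n :=
  MvPolynomial.rename Prod.snd (expOp (h/2) (alphaOp n 2 0 1) (tensorW ![f, g]))

/-- the tuple `(a₀, …, aᵢ ⋆ aᵢ₊₁, …, a_{N+1})`. -/
def insStar (n : ℕ) (h : ℝ) {N : ℕ} (a : Fin (N+2) → Weyl n) (i : Fin (N+1)) :
    Fin (N+1) → Weyl n := fun j =>
  if j.1 < i.1 then a ⟨j.1, by have := j.2; omega⟩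
  else if j.1 = i.1 then
    moyal n h (a ⟨i.1, by have := i.2; omega⟩) (a ⟨i.1+1, by have := i.2; omega⟩)
  else a ⟨j.1+1, by have := j.2; omega⟩

/-- the tuple `(a_{N+1} ⋆ a₀, a₁, …, a_N)`. -/
def rotStar (n : ℕ) (h : ℝ) {N : ℕ} (a : Fin (N+2) → Weyl n) : Fin (N+1) → Weyl n := fun j =>
  if j.1 = 0 then moyal n h (a ⟨N+1, by omega⟩) (a ⟨0, by omega⟩)
  else a ⟨j.1, by have := j.2; omega⟩

/-- The Hochschild coboundary `b` of an `(N+1)`-multilinear functional, on tuples: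
`(bφ)(a₀⊗⋯⊗a_{N+1}) = Σ_{i=0}^{N} (-1)^i φ(a₀⊗⋯⊗(aᵢ⋆aᵢ₊₁)⊗⋯) + (-1)^{N+1} φ((a_{N+1}⋆a₀)⊗a₁⊗⋯)`. -/
def hochb (n : ℕ) (h : ℝ) {N : ℕ} (φ : (Fin (N+1) → Weyl n) → ℝ)
    (a : Fin (N+2) → Weyl n) : ℝ :=
  (∑ i : Fin (N+1), (-1:ℝ)^(i.1) * φ (insStar n h a i)) + (-1:ℝ)^(N+1) * φ (rotStar n h a)

/-- Connes' coboundary `B` of an `(N+1)`-multilinear functional, on tuples: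
`(Bφ)(a₀⊗⋯⊗a_{N-1}) = Σ_{i=0}^{N-1} (-1)^{i(N-1)} φ(1⊗aᵢ⊗⋯⊗a_{N-1}⊗a₀⊗⋯⊗a_{i-1})`. -/
def connesB (n : ℕ) {N : ℕ} (φ : (Fin (N+1) → Weyl n) → ℝ) (a : Fin N → Weyl n) : ℝ :=
  ∑ l : Fin N, (-1:ℝ)^(l.1 * (N-1)) * φ (fun j => Fin.cases 1 (fun j' => a (l + j')) j)

namespace MvPolynomial

theorem pderiv_pderiv_comm {R σ : Type*} [CommRing R] (i j : σ) (p : MvPolynomial σ R) :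
    pderiv i (pderiv j p) = pderiv j (pderiv i p) := by
  classical
  have hbracket : ⁅pderiv i, pderiv j⁆ = (0 : Derivation R (MvPolynomial σ R) _) :=
    derivation_ext fun k => by
      rw [Derivation.commutator_apply]
      simp [Pi.single_apply, apply_ite]
  simpa [Derivation.commutator_apply, sub_eq_zero] using congr($hbracket p)

end MvPolynomial

theorem List.foldl_eq_zero_of_mem {ι M : Type*} [Zero M] (f : M → ι → M) (P : M → Prop)
    {L : List ι} (hP : ∀ l ∈ L, ∀ x, P x → P (f x l)) (hzero : ∀ l, f 0 l = 0)
    {l₀ : ι} (hl₀ : l₀ ∈ L) (hkill : ∀ x, P x → f x l₀ = 0) {x : M} (hx : P x) :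
    L.foldl f x = 0 := by
  induction L generalizing x with
  | nil => simp at hl₀
  | cons l L ih =>
    rw [List.foldl_cons]
    by_cases hl : l = l₀
    · rw [hl, hkill x hx, List.foldl_fixed' hzero]
    · exact ih (fun l' hl' => hP l' (.tail _ hl'))
        ((List.mem_cons.mp hl₀).resolve_left (Ne.symm hl)) (hP l (.head _) x hx)

open MvPolynomial

section Normalized

variable {n N : ℕ}

theorem pderiv_tensorW_of_eq_C {a : Fin N → Weyl n} {j : Fin N} {c : ℝ} (hc : a j = C c)
    (v : Fin (2*n)) : pderiv (j, v) (tensorW a) = 0 := by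
  classical
  refine pderiv_eq_zero_of_notMem_vars fun hmem => ?_
  obtain ⟨i, -, hi⟩ := Finset.mem_biUnion.mp (vars_prod _ hmem)
  obtain ⟨w, hw, hwv⟩ := Finset.mem_image.mp (vars_rename _ _ hi)
  obtain ⟨rfl, -⟩ := Prod.mk.inj hwv
  simp [hc] at hw

theorem pderiv_alphaOp_comm (x : Fin N × Fin (2*n)) (i j : Fin N) (F : JointW N n) :
    pderiv x (alphaOp n N i j F) = alphaOp n N i j (pderiv x F) := by
  simp only [alphaOp, LinearMap.sum_apply, map_sum, LinearMap.sub_apply, map_sub,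
    LinearMap.comp_apply, Derivation.coeFn_coe, pderiv_pderiv_comm x]

theorem alphaOp_apply_eq_zero {i j l : Fin N} {F : JointW N n}
    (hF : ∀ v, pderiv (l, v) F = 0) (hl : i = l ∨ j = l) : alphaOp n N i j F = 0 := by
  simp only [alphaOp, LinearMap.sum_apply, LinearMap.sub_apply, LinearMap.comp_apply,
    Derivation.coeFn_coe]
  refine Finset.sum_eq_zero fun s _ => ?_
  rcases hl with rfl | rfl
  · simp only [pderiv_pderiv_comm (i, _) (j, _) F, hF, map_zero, sub_zero]
  · simp only [hF, map_zero, sub_zero]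

theorem alphaWedge_eq_zero {k : ℕ} (slots : Fin (2*k) → Fin N) (h : ℝ) {l : Fin N}
    {F : JointW N n} (hF : ∀ v, pderiv (l, v) F = 0) (hl : l ∈ Set.range slots) :
    alphaWedge n N k slots h F = 0 := by
  obtain ⟨i₀, rfl⟩ := hl
  refine smul_eq_zero_of_right _ (Finset.sum_eq_zero fun σ _ => ?_)
  obtain ⟨t, rfl⟩ : ∃ t, σ t = i₀ := ⟨σ.symm i₀, σ.apply_symm_apply i₀⟩
  have hpair : ∃ p ∈ List.finRange k,
      (⟨2*p.1, by omega⟩ : Fin (2*k)) = t ∨ (⟨2*p.1+1, by omega⟩ : Fin (2*k)) = t := by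
    refine ⟨⟨t.1 / 2, by omega⟩, List.mem_finRange _, ?_⟩
    rcases Nat.even_or_odd' t.1 with ⟨q, hq | hq⟩
    · exact .inl (Fin.ext (by simp only; omega))
    · exact .inr (Fin.ext (by simp only; omega))
  obtain ⟨p, hp, hpt⟩ := hpair
  refine smul_eq_zero_of_right _ (smul_eq_zero_of_right _ ?_)
  exact List.foldl_eq_zero_of_mem _ (fun G => ∀ v, pderiv (slots (σ t), v) G = 0)
    (fun _ _ G hG v => by rw [pderiv_alphaOp_comm, hG, map_zero]) (fun _ => map_zero _) hp
    (fun G hG => alphaOp_apply_eq_zero hG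
      (hpt.imp (congrArg (slots ∘ σ)) (congrArg (slots ∘ σ)))) hF

theorem prodExpAlpha_zero (h : ℝ) (u : Fin N → ℝ) : prodExpAlpha n N h u 0 = 0 := by
  unfold prodExpAlpha
  refine List.foldl_fixed' (fun i => ?_) _
  refine List.foldl_fixed' (fun j => ?_) _
  split_ifs <;> simp [expOp]

theorem integral_evalZero_prodExpAlpha_alphaWedge_eq_zero {m k : ℕ} (h : ℝ)
    (slots : Fin (2*k) → Fin (m+1)) {a : Fin (m+1) → Weyl n} {j : Fin (m+1)} {c : ℝ}
    (hc : a j = C c) (hj : j ∈ Set.range slots) :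
    ∫ u in simplexSet m, evalZero (prodExpAlpha n (m+1) h (uExt u)
      (alphaWedge n (m+1) k slots h (tensorW a))) = 0 := by
  simp [alphaWedge_eq_zero slots h (pderiv_tensorW_of_eq_C hc) hj, prodExpAlpha_zero, evalZero]

end Normalized

theorem tau_normalized_general (n : ℕ) (h : ℝ) :
    (∀ k : ℕ, 1 ≤ k → k ≤ n → ∀ a : Fin (2*k+1) → Weyl n, ∀ j : Fin (2*k+1),
      1 ≤ j.1 → (∃ c : ℝ, a j = MvPolynomial.C c) → tau n h (2*k) a = 0)
    ∧ (∀ k : ℕ, 1 ≤ k → k ≤ n → ∀ a : Fin (2*k-1+1) → Weyl n, ∀ j : Fin (2*k-1+1),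
      (∃ c : ℝ, a j = MvPolynomial.C c) → tau n h (2*k-1) a = 0) := by
  constructor
  · rintro k - - a j hj ⟨c, hc⟩
    rw [tau, if_pos (by omega), integral_evalZero_prodExpAlpha_alphaWedge_eq_zero h _ hc
      ⟨⟨j.1 - 1, by omega⟩, Fin.ext (by simp only; omega)⟩, mul_zero]
  · rintro k hk - a j ⟨c, hc⟩
    rw [tau, if_neg (by omega), integral_evalZero_prodExpAlpha_alphaWedge_eq_zero h _ hc
      ⟨⟨j.1, by omega⟩, rfl⟩, mul_zero]

/-- The cochains `τ_m` are normalized (reduced): for `1 ≤ k ≤ n`,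
`τ_{2k}(a₀⊗⋯⊗a_{2k}) = 0` whenever some `a_j` with `j ≥ 1` is a constant polynomial,
and `τ_{2k-1}(a₀⊗⋯⊗a_{2k-1}) = 0` whenever some `a_j` (any `j`) is constant. -/
theorem tau_normalized (n : ℕ) (hn : 1 ≤ n) (h : ℝ) :
    (∀ k : ℕ, 1 ≤ k → k ≤ n → ∀ a : Fin (2*k+1) → Weyl n, ∀ j : Fin (2*k+1),
      1 ≤ j.1 → (∃ c : ℝ, a j = MvPolynomial.C c) → tau n h (2*k) a = 0)
    ∧ (∀ k : ℕ, 1 ≤ k → k ≤ n → ∀ a : Fin (2*k-1+1) → Weyl n, ∀ j : Fin (2*k-1+1),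
      (∃ c : ℝ, a j = MvPolynomial.C c) → tau n h (2*k-1) a = 0) :=
  tau_normalized_general n h
end
end

section
/- For every idempotent e ∈ A (e² = e) and every k ≥ 0, the Chern character Ch_k(e) = (c_k, c_{k−1}, …, c₀) is closed under b + B̄ in the normalized mixed complex: b c₀ = 0 and b cᵢ + B̄ cᵢ₋₁ = 0 in C̄_{2i−1}(A) for every 1 ≤ i ≤ k. -/
noncomputable section

/-- the tuple `(a₀, …, aᵢaᵢ₊₁, …, a_N)` : merge slots `i` and `i+1`. -/
def mergeAt {A : Type*} [Mul A] {N : ℕ} (v : Fin (N+1) → A) (i : Fin N) : Fin N → A :=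
  fun j =>
    if j.1 < i.1 then v ⟨j.1, by have := j.2; omega⟩
    else if j.1 = i.1 then v ⟨i.1, by have := i.2; omega⟩ * v ⟨i.1+1, by have := i.2; omega⟩
    else v ⟨j.1+1, by have := j.2; omega⟩

/-- the tuple `(a_N a₀, a₁, …, a_{N-1})`. -/
def rotMul {A : Type*} [Mul A] {N : ℕ} (v : Fin (N+1) → A) : Fin N → A :=
  fun j =>
    if j.1 = 0 then v ⟨N, by omega⟩ * v ⟨0, by omega⟩
    else v ⟨j.1, by have := j.2; omega⟩

/-- The submodule of degenerate chains: the kernel of `A^{⊗N} → C̄_{N-1}(A) = A ⊗ (A/k·1)^{⊗(N-1)}`,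
spanned by the pure tensors having the unit `1` in some slot `j ≥ 1`. -/
def degSub (K : Type*) [CommRing K] (A : Type*) [Ring A] [Algebra K A] (N : ℕ) :
    Submodule K (PiTensorProduct K (fun _ : Fin N => A)) :=
  Submodule.span K
    {x | ∃ (v : Fin N → A) (j : Fin N), j.1 ≠ 0 ∧ v j = 1 ∧ x = PiTensorProduct.tprod K v}

/-- the tuple underlying the Chern character component `c_i`, `N = 2i+1` entries:
`((e - 1/2), e, …, e)` (just `(e)` in the degenerate case `N = 1`, where `c₀ = e`). -/
def chTuple (R : Type*) [CommRing R] [Algebra ℚ R] (A : Type*) [Ring A] [Algebra R A]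
    (e : A) (N : ℕ) : Fin N → A :=
  fun j => if j.1 = 0 ∧ 2 ≤ N then e - (algebraMap ℚ R (1/2 : ℚ)) • (1:A) else e

open PiTensorProduct

/-!
Modulo degenerate chains the first slot of a chain counts exactly and the other slots count
only modulo `R ∙ 1`. By idempotency every middle face of `b (f ⊗ e^{⊗2i})`, `f = e - 1/2`, is
`f ⊗ e^{⊗(2i-1)}`, and in even degree these faces cancel in pairs except for one, so
`b (f ⊗ e^{⊗2i}) = (fe - f + ef) ⊗ e^{⊗(2i-1)} = ½ · 1 ⊗ e^{⊗(2i-1)}`. Each of the `2i-1`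
cyclic terms of `B̄ c_{i-1}` is `1 ⊗ e^{⊗(2i-1)}` modulo degenerate chains, and the coefficients
cancel because `(2i)!/i! = 2(2i-1) · (2i-2)!/(i-1)!`.
-/

section HeadTuple

variable {A : Type*} {N : ℕ}

def headTuple (a e : A) : Fin N → A := fun j => if j.1 = 0 then a else e

theorem headTuple_eq_update [NeZero N] (a e : A) :
    (headTuple a e : Fin N → A) = Function.update (fun _ => e) 0 a := by
  funext j
  by_cases hj : j = 0 <;> simp [headTuple, hj, Function.update]

variable [Mul A] {e : A}

theorem mergeAt_headTuple (he : IsIdempotentElem e) (a : A) (j : Fin N) :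
    mergeAt (headTuple a e : Fin (N + 1) → A) j = headTuple (if j.1 = 0 then a * e else a) e := by
  funext p
  simp only [mergeAt, headTuple, Nat.add_one_ne_zero, if_false]
  split_ifs <;> first | rfl | omega | exact he

theorem rotMul_headTuple [NeZero N] (a : A) :
    rotMul (headTuple a e : Fin (N + 1) → A) = headTuple (e * a) e := by
  funext p
  simp +contextual [rotMul, headTuple, NeZero.ne N]

end HeadTuple

section Degenerate

variable {R : Type*} [CommRing R] {A : Type*} [Ring A] [Algebra R A] {N : ℕ}

theorem tprod_mem_degSub {v : Fin N → A} {j : Fin N} (hj : j.1 ≠ 0) (hv : v j = 1) :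
    tprod R v ∈ degSub R A N :=
  Submodule.subset_span ⟨v, j, hj, hv, rfl⟩

theorem tprod_update_add_smul_one_smodEq (v : Fin N → A) {j : Fin N} (hj : j.1 ≠ 0)
    (a : A) (d : R) :
    tprod R (Function.update v j (a + d • 1)) ≡ tprod R (Function.update v j a)
      [SMOD degSub R A N] := by
  rw [SModEq.sub_mem, MultilinearMap.map_update_add, MultilinearMap.map_update_smul,
    add_sub_cancel_left]
  exact Submodule.smul_mem _ _ (tprod_mem_degSub hj (Function.update_self ..))

theorem tprod_smodEq_of_sub_mem_span_one {u w : Fin N → A}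
    (h0 : ∀ j : Fin N, j.1 = 0 → u j = w j) (h : ∀ j, u j - w j ∈ R ∙ (1 : A)) :
    tprod R u ≡ tprod R w [SMOD degSub R A N] := by
  suffices key : ∀ s : Finset (Fin N), ∀ u : Fin N → A, (∀ j ∉ s, u j = w j) →
      (∀ j ∈ s, j.1 ≠ 0 ∧ u j - w j ∈ R ∙ (1 : A)) →
      tprod R u ≡ tprod R w [SMOD degSub R A N] by
    refine key {j | j.1 ≠ 0} u (fun j hj => h0 j ?_) (fun j hj => ⟨?_, h j⟩) <;> simp_all
  intro s
  induction s using Finset.induction_on with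
  | empty => intro u hu _; rw [funext fun j => hu j (Finset.notMem_empty j)]
  | insert a s ha ih =>
    intro u hu hs
    obtain ⟨ha0, d, hd⟩ := (hs a (Finset.mem_insert_self a s)).imp_right
      Submodule.mem_span_singleton.1
    have hu' : tprod R (Function.update u a (w a)) ≡ tprod R w [SMOD degSub R A N] := by
      refine ih _ (fun j hj => ?_) (fun j hj => ?_)
      · by_cases hja : j = a
        · rw [hja, Function.update_self]
        · rw [Function.update_of_ne hja]
          exact hu j (by simp [hja, hj])
      · rw [Function.update_of_ne (ne_of_mem_of_not_mem hj ha)]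
        exact hs j (Finset.mem_insert_of_mem hj)
    have hua : u a = w a + d • 1 := by rw [hd, add_sub_cancel]
    calc tprod R u = tprod R (Function.update u a (w a + d • 1)) := by
          rw [← hua, Function.update_eq_self]
      _ ≡ tprod R (Function.update u a (w a)) [SMOD degSub R A N] :=
          tprod_update_add_smul_one_smodEq u ha0 (w a) d
      _ ≡ tprod R w [SMOD degSub R A N] := hu'

theorem tprod_cases_one_smodEq {M : ℕ} (h : N = M + 1) {w : Fin M → A} {e : A}
    (hw : ∀ j, w j - e ∈ R ∙ (1 : A)) :
    tprod R (fun j : Fin N => Fin.cases (1 : A) w (Fin.cast h j))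
      ≡ tprod R (headTuple 1 e : Fin N → A) [SMOD degSub R A N] := by
  subst h
  refine tprod_smodEq_of_sub_mem_span_one (fun j hj => ?_) fun j => ?_
  · simp [(Fin.ext hj : j = 0), headTuple]
  · cases j using Fin.cases with
    | zero => simp [headTuple]
    | succ j => simpa [headTuple] using hw j

end Degenerate

section Boundary

variable {R : Type*} [CommRing R] {A : Type*} [Ring A] [Algebra R A] {N : ℕ} [NeZero N]
  {e : A}

theorem IsIdempotentElem.mul_sub_add_mul_of_add_self_eq_one (he : IsIdempotentElem e) {c : R}
    (hc : c + c = 1) : (e - c • 1) * e - (e - c • 1) + e * (e - c • 1) = c • 1 := by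
  have h2 : c • e + c • e = e := by rw [← add_smul, hc, one_smul]
  simp only [sub_mul, mul_sub, smul_mul_assoc, mul_smul_comm, one_mul, mul_one, he.eq]
  linear_combination (norm := module) -h2

theorem hochschild_boundary_headTuple (hN : Even N) (he : IsIdempotentElem e) (a : A) :
    (∑ j : Fin N, (-1 : R) ^ j.1 • tprod R (mergeAt (headTuple a e : Fin (N + 1) → A) j))
      + (-1 : R) ^ N • tprod R (rotMul (headTuple a e : Fin (N + 1) → A))
    = tprod R (headTuple (a * e - a + e * a) e : Fin N → A) := by
  set L := (PiTensorProduct.tprod R).toLinearMap (fun _ : Fin N => e) 0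
  have hL (x : A) : tprod R (headTuple x e : Fin N → A) = L x := by
    rw [headTuple_eq_update]; rfl
  have hsign : ∑ j : Fin N, (-1 : R) ^ j.1 = 0 := by
    rw [Fin.sum_univ_eq_sum_range (fun j => (-1 : R) ^ j) N, neg_one_geom_sum, if_pos hN]
  have hsplit (j : Fin N) : (-1 : R) ^ j.1 • L (if j.1 = 0 then a * e else a)
      = (-1 : R) ^ j.1 • L a + if j = 0 then L (a * e) - L a else 0 := by
    by_cases hj : j = 0 <;> simp [hj]
  simp only [mergeAt_headTuple he, rotMul_headTuple, hL, hN.neg_one_pow, one_smul, hsplit,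
    Finset.sum_add_distrib, ← Finset.sum_smul, hsign, zero_smul, Finset.sum_ite_eq',
    Finset.mem_univ, if_true, map_add, map_sub]
  abel

end Boundary

theorem Nat.factorial_two_mul_succ_div_factorial_succ (m : ℕ) :
    (2 * (m + 1)).factorial / (m + 1).factorial
      = 2 * (2 * m + 1) * ((2 * m).factorial / m.factorial) := by
  obtain ⟨q, hq⟩ := Nat.factorial_dvd_factorial (by omega : m ≤ 2 * m)
  rw [hq, Nat.mul_div_cancel_left _ m.factorial_pos]
  refine Nat.div_eq_of_eq_mul_left (m + 1).factorial_pos ?_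
  rw [show 2 * (m + 1) = 2 * m + 1 + 1 by ring, Nat.factorial_succ, Nat.factorial_succ, hq,
    Nat.factorial_succ]
  ring

section Chern

variable {R : Type*} [CommRing R] [Algebra ℚ R] {A : Type*} [Ring A] [Algebra R A] {e : A}

theorem algebraMap_half_add_self : algebraMap ℚ R (1 / 2) + algebraMap ℚ R (1 / 2) = 1 := by
  rw [← map_add, ← map_one (algebraMap ℚ R)]; norm_num

theorem chTuple_eq_headTuple {N : ℕ} (hN : 2 ≤ N) :
    chTuple R A e N = headTuple (e - algebraMap ℚ R (1 / 2) • 1) e := by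
  funext j
  simp [chTuple, headTuple, hN]

theorem chTuple_sub_mem_span_one (N : ℕ) (j : Fin N) : chTuple R A e N j - e ∈ R ∙ (1 : A) := by
  unfold chTuple
  split_ifs
  · rw [sub_sub_cancel_left]
    exact neg_mem (Submodule.smul_mem _ _ (Submodule.mem_span_singleton_self 1))
  · rw [sub_self]; exact zero_mem _

theorem hochschild_boundary_chTuple {N : ℕ} [NeZero N] (hN : Even N) (he : IsIdempotentElem e) :
    (∑ j : Fin N, (-1 : R) ^ j.1 • tprod R (mergeAt (chTuple R A e (N + 1)) j))
      + (-1 : R) ^ N • tprod R (rotMul (chTuple R A e (N + 1)))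
    = algebraMap ℚ R (1 / 2) • tprod R (headTuple 1 e : Fin N → A) := by
  rw [chTuple_eq_headTuple (by have := NeZero.ne N; omega), hochschild_boundary_headTuple hN he,
    he.mul_sub_add_mul_of_add_self_eq_one algebraMap_half_add_self, headTuple_eq_update,
    headTuple_eq_update, MultilinearMap.map_update_smul]

theorem connes_boundary_chTuple_smodEq (i : ℕ) (h : 2 * i = 2 * i - 1 + 1) :
    (∑ l : Fin (2 * i - 1), (-1 : R) ^ (l.1 * (2 * i - 2)) •
        tprod R (fun j : Fin (2 * i) =>
          Fin.cases (1 : A) (fun j' => chTuple R A e (2 * i - 1) (l + j')) (Fin.cast h j)))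
      ≡ ((2 * i - 1 : ℕ) : R) • tprod R (headTuple 1 e : Fin (2 * i) → A)
      [SMOD degSub R A (2 * i)] := by
  have hsign (l : ℕ) : (-1 : R) ^ (l * (2 * i - 2)) = 1 :=
    (Even.mul_left ⟨i - 1, by omega⟩ l).neg_one_pow
  refine (SModEq.sum (y := fun _ => tprod R (headTuple 1 e)) fun l _ => ?_).trans ?_
  · rw [hsign, one_smul]
    exact tprod_cases_one_smodEq h fun j => chTuple_sub_mem_span_one _ _
  · rw [Finset.sum_const, Finset.card_univ, Fintype.card_fin, Nat.cast_smul_eq_nsmul]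

theorem chern_coeff_cancel {i : ℕ} (hi : 1 ≤ i) :
    (-1 : R) ^ i * (((2 * i).factorial / i.factorial : ℕ) : R) * algebraMap ℚ R (1 / 2)
      + (-1 : R) ^ (i - 1) * (((2 * (i - 1)).factorial / (i - 1).factorial : ℕ) : R)
        * ((2 * i - 1 : ℕ) : R) = 0 := by
  obtain ⟨m, rfl⟩ : ∃ m, i = m + 1 := ⟨i - 1, by omega⟩
  rw [Nat.add_sub_cancel, Nat.factorial_two_mul_succ_div_factorial_succ,
    show 2 * (m + 1) - 1 = 2 * m + 1 by omega]
  push_cast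
  linear_combination -(-1 : R) ^ m * (2 * m + 1) * (((2 * m).factorial / m.factorial : ℕ) : R)
    * algebraMap_half_add_self (R := R)

end Chern

/-- For every idempotent `e` the Chern character
`Ch_k(e) = (c_k, …, c₀)`, `c₀ = e`, `cᵢ = (-1)^i ((2i)!/i!) (e - 1/2) ⊗ e^{⊗ 2i}`,
is `(b+B̄)`-closed in the normalized mixed complex: `b c₀ = 0` (the differential out of
degree `0` lands in `C̄₋₁ = 0`), and for `1 ≤ i ≤ k` the element `b cᵢ + B̄ cᵢ₋₁` of
`A^{⊗ 2i}` is degenerate, i.e. vanishes in `C̄_{2i-1}(A)`. -/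
theorem chern_character_closed (R : Type*) [CommRing R] [Algebra ℚ R]
    (A : Type*) [Ring A] [Algebra R A] (e : A) (he : e * e = e) (k : ℕ) :
    -- `b c₀ = 0` : the degree-0 differential takes values in the zero module `C̄₋₁ = 0`
    (∀ f : PiTensorProduct R (fun _ : Fin 1 => A) →ₗ[R] (⊥ : Submodule R A),
        f (PiTensorProduct.tprod R (chTuple R A e 1)) = 0)
    -- `b cᵢ + B̄ cᵢ₋₁ = 0` in `C̄_{2i-1}(A)` for `1 ≤ i ≤ k`
    ∧ ∀ (i : ℕ) (hi : 1 ≤ i), i ≤ k →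
        (((-1:R)^i * (((2*i).factorial / i.factorial : ℕ) : R)) •
            ((∑ j : Fin (2*i), (-1:R)^(j.1) •
                PiTensorProduct.tprod R (mergeAt (chTuple R A e (2*i+1)) j))
              + (-1:R)^(2*i) • PiTensorProduct.tprod R (rotMul (chTuple R A e (2*i+1)))))
        + (((-1:R)^(i-1) * (((2*(i-1)).factorial / (i-1).factorial : ℕ) : R)) •
            (∑ l : Fin (2*i-1), (-1:R)^(l.1 * (2*i-2)) •
                PiTensorProduct.tprod R (fun j : Fin (2*i) =>
                  Fin.cases (1:A) (fun j' => chTuple R A e (2*i-1) (l + j'))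
                    (Fin.cast (by omega : 2*i = 2*i-1+1) j))))
        ∈ degSub R A (2*i) := by
  refine ⟨fun f => Subsingleton.elim _ _, fun i hi _ => ?_⟩
  have : NeZero (2 * i) := ⟨by omega⟩
  rw [← SModEq.zero, hochschild_boundary_chTuple (even_two_mul i) he]
  refine ((SModEq.refl _).add ((connes_boundary_chTuple_smodEq i _).smul _)).trans ?_
  rw [smul_smul, smul_smul, ← add_smul, chern_coeff_cancel hi, zero_smul]
end
end

section
/- The partition-of-unity map ρ from Čech cochains to Alexander–Spanier cochains is a chain map: for every k ≥ 0 and every c : ι^{k+1} → ℝ, ρ(δ̌ c) = δ(ρ(c)) in C^∞(M^{k+2}). -/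
open scoped Manifold

noncomputable section

/-- The Alexander–Spanier coboundary:
`(δf)(x₀,…,x_{k+1}) = Σ_{i=0}^{k+1} (-1)^i f(x₀,…,x̂ᵢ,…,x_{k+1})`. -/
def ASdelta {M : Type*} (m : ℕ) (f : (Fin (m+1) → M) → ℝ) (x : Fin (m+2) → M) : ℝ :=
  ∑ i : Fin (m+2), (-1:ℝ)^(i.1) * f (fun j => x (i.succAbove j))

/-- The Čech coboundary of a Čech cochain `c : ι^{k+1} → ℝ`. -/
def cechDelta {ι : Type*} (k : ℕ) (c : (Fin (k+1) → ι) → ℝ) (w : Fin (k+2) → ι) : ℝ :=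
  ∑ i : Fin (k+2), (-1:ℝ)^(i.1) * c (fun j => w (i.succAbove j))

/-- The partition-of-unity map `ρ` from Čech cochains to Alexander–Spanier cochains:
`ρ(c)(x₀,…,x_k) = Σ_{(u₀,…,u_k)} c(u₀,…,u_k) φ_{u₀}(x₀)⋯φ_{u_k}(x_k)` (the locally
finite sum realized as a `finsum`). -/
def rhoPU {ι M : Type*} (φ : ι → M → ℝ) (k : ℕ) (c : (Fin (k+1) → ι) → ℝ)
    (x : Fin (k+1) → M) : ℝ :=
  ∑ᶠ w : Fin (k+1) → ι, c w * ∏ i, φ (w i) (x i)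

/-! The tuple `w ∈ ι^{k+2}` splits as `(wᵢ, w ∘ succAbove i)`, so the sum defining `ρ` of the
`i`-th Čech face of `c` factors as `(Σ_u φ_u(xᵢ)) · ρ(c)(x₀,…,x̂ᵢ,…,x_{k+1})`. As the `φ_u` sum to
one, this is the `i`-th Alexander–Spanier face of `ρ(c)`, and `ρ` commutes with the alternating
sum since point-finiteness of the supports makes every sum involved finite. -/

open Function

section

variable {ι R : Type*} [CommSemiring R] {n : ℕ}

theorem hasFiniteSupport_mul_prod (a : Fin n → ι → R) (ha : ∀ j, HasFiniteSupport (a j))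
    (F : (Fin n → ι) → R) : HasFiniteSupport fun w => F w * ∏ j, a j (w j) := by
  refine (Set.Finite.pi (t := fun j => support (a j)) fun j => ha j).subset fun w hw => ?_
  intro j _ hj
  exact hw (mul_eq_zero_of_right _ (Finset.prod_eq_zero (f := fun j => a j (w j))
    (Finset.mem_univ j) hj))

theorem finsum_comp_succAbove_mul_prod [NoZeroDivisors R] (a : Fin (n+1) → ι → R)
    (ha : ∀ j, HasFiniteSupport (a j)) (F : (Fin n → ι) → R) (i : Fin (n+1)) :
    ∑ᶠ w : Fin (n+1) → ι, F (fun j => w (i.succAbove j)) * ∏ j, a j (w j)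
      = (∑ᶠ u, a i u) * ∑ᶠ v : Fin n → ι, F v * ∏ j, a (i.succAbove j) (v j) := by
  set e := Fin.insertNthEquiv (fun _ => ι) i
  set G := fun w : Fin (n+1) → ι => F (fun j => w (i.succAbove j)) * ∏ j, a j (w j)
  have hG : HasFiniteSupport fun p => G (e p) :=
    (hasFiniteSupport_mul_prod a ha fun w => F fun j => w (i.succAbove j)).preimage e.injective.injOn
  change ∑ᶠ w, G w = _
  rw [← finsum_comp_equiv e, finsum_curry (fun p => G (e p)) hG, finsum_mul]
  refine finsum_congr fun u => ?_
  rw [mul_finsum]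
  refine finsum_congr fun v => ?_
  simp only [G, e, Fin.insertNthEquiv_apply, Fin.prod_univ_succAbove _ i,
    Fin.insertNth_apply_same, Fin.insertNth_apply_succAbove]
  ring

end

section

variable {ι M : Type*} {φ : ι → M → ℝ}

theorem rhoPU_cechDelta (hφ : ∀ x, HasFiniteSupport fun u => φ u x) (k : ℕ)
    (c : (Fin (k+1) → ι) → ℝ) (x : Fin (k+2) → M) :
    rhoPU φ (k+1) (cechDelta k c) x
      = ∑ i : Fin (k+2), (-1:ℝ)^(i.1) * rhoPU φ (k+1) (fun w => c fun j => w (i.succAbove j)) x := by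
  simp only [rhoPU, cechDelta, Finset.sum_mul, mul_finsum, mul_assoc]
  refine (sum_finsum_comm _ _ fun i _ => ?_).symm
  simpa only [mul_assoc] using hasFiniteSupport_mul_prod (fun j u => φ u (x j)) (fun j => hφ (x j))
    fun w => (-1:ℝ)^(i.1) * c fun j => w (i.succAbove j)

theorem rhoPU_comp_succAbove (hφ : ∀ x, HasFiniteSupport fun u => φ u x) (k : ℕ)
    (c : (Fin (k+1) → ι) → ℝ) (x : Fin (k+2) → M) (i : Fin (k+2)) :
    rhoPU φ (k+1) (fun w => c fun j => w (i.succAbove j)) x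
      = (∑ᶠ u, φ u (x i)) * rhoPU φ k c fun j => x (i.succAbove j) :=
  finsum_comp_succAbove_mul_prod (fun j u => φ u (x j)) (fun j => hφ (x j)) c i

end

theorem rho_partition_of_unity_chain_map_general
    (M : Type*) [TopologicalSpace M]
    (ι : Type*) (φ : ι → M → ℝ)
    (hlf : LocallyFinite fun u => Function.support (φ u))
    (hsum : ∀ x, ∑ᶠ u, φ u x = 1)
    (k : ℕ) (c : (Fin (k+1) → ι) → ℝ) (x : Fin (k+2) → M) :
    rhoPU φ (k+1) (cechDelta k c) x = ASdelta k (rhoPU φ k c) x := by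
  have hφ : ∀ x, HasFiniteSupport fun u => φ u x := hlf.point_finite
  rw [rhoPU_cechDelta hφ, ASdelta]
  refine Finset.sum_congr rfl fun i _ => ?_
  rw [rhoPU_comp_succAbove hφ, hsum, one_mul]

/-- For a smooth partition of unity `(φ_u)_{u∈ι}` on a smooth manifold
`M`, the map `ρ` is a chain map from Čech cochains to Alexander–Spanier cochains:
`ρ(δ̌c) = δ(ρ(c))` for every Čech `k`-cochain `c`. -/
theorem rho_partition_of_unity_chain_map
    {E : Type*} [NormedAddCommGroup E] [NormedSpace ℝ E]
    {H : Type*} [TopologicalSpace H] (I : ModelWithCorners ℝ E H)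
    (M : Type*) [TopologicalSpace M] [ChartedSpace H M] [IsManifold I (⊤ : ℕ∞) M]
    (ι : Type*) (φ : ι → M → ℝ)
    (hsmooth : ∀ u, ContMDiff I (modelWithCornersSelf ℝ ℝ) (⊤ : ℕ∞) (φ u))
    (hlf : LocallyFinite fun u => Function.support (φ u))
    (hsum : ∀ x, ∑ᶠ u, φ u x = 1)
    (k : ℕ) (c : (Fin (k+1) → ι) → ℝ) (x : Fin (k+2) → M) :
    rhoPU φ (k+1) (cechDelta k c) x = ASdelta k (rhoPU φ k c) x :=
  rho_partition_of_unity_chain_map_general M ι φ hlf hsum k c x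
end
end
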